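/- arXiv:2502.07553 — 6 statements merged into one kernel-verified Lean document; each statement's English description precedes it below -/
import Mathlib

section
/- For every subset B of [n] with |B| = k, the function h_B(x) = 1 + Σ_{j=1}^k (-1)^j (8j-4) · ReLU(Σ_{p∈B} x_p + 0.5 - j) satisfies h_B(x) = ∏_{i∈B} (-1)^{x_i} for every binary string x ∈ {0,1}^n. That is, a one-hidden-layer ReLU network with k neurons exactly computes the k-parity function on B. -/
/-!
With `c j = (-1) ^ j * (8 * j - 4)`, the network `t ↦ 1 + ∑ j ≤ k, c j * ReLU (t + 1/2 - j)` is
piecewise linear with kinks at the half-integers. At an integer `s ≤ k` exactly the neurons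
`j ≤ s` are active, and there the value is `1 + ∑ j ≤ s, c j * (s + 1/2 - j)`. Going from `s`
to `s + 1` adds `∑ j ≤ s, c j = (-1) ^ s * 4 * s` plus half of `c (s + 1)`, a total of
`2 * (-1) ^ (s + 1)`, so the value alternates between `1` and `-1`. The parity of `x` on `B` is
`(-1) ^ s` with `s = ∑ p ∈ B, x p ≤ |B|`.
-/

open Finset

noncomputable def parityNet (k : ℕ) (t : ℝ) : ℝ :=
  1 + ∑ j ∈ Icc 1 k, (-1 : ℝ) ^ j * (8 * j - 4) * max (t + 0.5 - j) 0

lemma sum_Icc_neg_one_pow_mul_coeff (k : ℕ) :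
    ∑ j ∈ Icc 1 k, (-1 : ℝ) ^ j * (8 * j - 4) = (-1) ^ k * (4 * k) := by
  induction k with
  | zero => simp
  | succ k ih =>
    rw [sum_Icc_succ_top (by omega), ih]
    push_cast
    ring

lemma sum_Icc_neg_one_pow_mul_coeff_mul_sub (s : ℕ) :
    ∑ j ∈ Icc 1 s, (-1 : ℝ) ^ j * (8 * j - 4) * ((s : ℝ) + 0.5 - j) = (-1) ^ s - 1 := by
  induction s with
  | zero => simp
  | succ s ih =>
    have hshift : ∑ j ∈ Icc 1 s, (-1 : ℝ) ^ j * (8 * j - 4) * (((s + 1 : ℕ) : ℝ) + 0.5 - j)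
        = ∑ j ∈ Icc 1 s, (-1 : ℝ) ^ j * (8 * j - 4) * ((s : ℝ) + 0.5 - j)
          + ∑ j ∈ Icc 1 s, (-1 : ℝ) ^ j * (8 * j - 4) := by
      rw [← sum_add_distrib]
      refine sum_congr rfl fun j _ => ?_
      push_cast
      ring
    rw [sum_Icc_succ_top (by omega), hshift, ih, sum_Icc_neg_one_pow_mul_coeff]
    push_cast
    ring

lemma parityNet_natCast_eq_sum_Icc (k s : ℕ) (hs : s ≤ k) :
    parityNet k s = 1 + ∑ j ∈ Icc 1 s, (-1 : ℝ) ^ j * (8 * j - 4) * ((s : ℝ) + 0.5 - j) := by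
  have hinactive : ∀ j ∈ Icc 1 k, j ∉ Icc 1 s →
      (-1 : ℝ) ^ j * (8 * j - 4) * max ((s : ℝ) + 0.5 - j) 0 = 0 := by
    intro j hjk hjs
    have hsj : (s : ℝ) + 1 ≤ j := by
      simp only [mem_Icc, not_and, not_le] at hjk hjs
      exact_mod_cast hjs hjk.1
    rw [max_eq_right (by linarith), mul_zero]
  rw [parityNet, ← sum_subset (Icc_subset_Icc_right hs) hinactive]
  congr 1
  refine sum_congr rfl fun j hj => ?_
  have hjs : (j : ℝ) ≤ s := by exact_mod_cast (mem_Icc.mp hj).2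
  rw [max_eq_left (by linarith)]

lemma parityNet_natCast (k s : ℕ) (hs : s ≤ k) : parityNet k s = (-1) ^ s := by
  rw [parityNet_natCast_eq_sum_Icc k s hs, sum_Icc_neg_one_pow_mul_coeff_mul_sub]
  ring

theorem ffnn_expresses_k_parity_general (n k : ℕ)
    (B : Finset (Fin n)) (hB : B.card = k) (x : Fin n → Fin 2) :
    1 + ∑ j ∈ Finset.Icc 1 k, (-1 : ℝ) ^ j * (8 * j - 4) *
        max ((∑ p ∈ B, (x p : ℝ)) + 0.5 - j) 0
      = ∏ i ∈ B, (-1 : ℝ) ^ (x i : ℕ) := by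
  set s : ℕ := ∑ p ∈ B, (x p : ℕ)
  have hsum : ∑ p ∈ B, (x p : ℝ) = s := by
    simp only [s, Nat.cast_sum]
  have hsk : s ≤ k := by
    calc s ≤ ∑ _p ∈ B, 1 := sum_le_sum fun p _ => Nat.le_of_lt_succ (x p).isLt
      _ = k := by rw [sum_const, smul_eq_mul, mul_one, hB]
  rw [prod_pow_eq_pow_sum, hsum]
  exact parityNet_natCast k s hsk

/-- A one-hidden-layer ReLU network with `k` neurons exactly computes the
`k`-parity function on `B`. -/
theorem ffnn_expresses_k_parity (n k : ℕ) (hk : k ≤ n)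
    (B : Finset (Fin n)) (hB : B.card = k) (x : Fin n → Fin 2) :
    1 + ∑ j ∈ Finset.Icc 1 k, (-1 : ℝ) ^ j * (8 * j - 4) *
        max ((∑ p ∈ B, (x p : ℝ)) + 0.5 - j) 0
      = ∏ i ∈ B, (-1 : ℝ) ^ (x i : ℕ) :=
  ffnn_expresses_k_parity_general n k B hB x
end

section
/- For every natural number s with 0 ≤ s ≤ k, the value 1 + Σ_{j=1}^k (-1)^j (8j-4) · max(s + 0.5 - j, 0) equals (-1)^s. -/
/-! For `j > s` the ReLU term vanishes, so only `j ≤ s` contribute and the maxima can be dropped.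
Passing from `s` to `s + 1` shifts every old argument by `1`, which adds the partial sum
`∑_{j ≤ s} (-1)^j (8j - 4) = 4s (-1)^s`, while the new term `j = s + 1` contributes
`-(4s + 2)(-1)^s`; the net change `-2 (-1)^s` turns `(-1)^s` into `(-1)^(s+1)`. -/

open Finset

lemma sum_Icc_mul_max_sub_eq_sum_Icc (c : ℕ → ℝ) {s k : ℕ} (hs : s ≤ k) {x : ℝ}
    (hsx : (s : ℝ) ≤ x) (hxs : x < s + 1) :
    ∑ j ∈ Icc 1 k, c j * max (x - j) 0 = ∑ j ∈ Icc 1 s, c j * (x - j) := by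
  rw [← sum_subset (Icc_subset_Icc_right hs)]
  · refine sum_congr rfl fun j hj => ?_
    have hjs : (j : ℝ) ≤ s := by exact_mod_cast (mem_Icc.mp hj).2
    rw [max_eq_left (by linarith)]
  · intro j hjk hjs
    have hsj : (s : ℝ) + 1 ≤ j := by
      exact_mod_cast (show s + 1 ≤ j by simp only [mem_Icc] at hjk hjs; omega)
    rw [max_eq_right (by linarith), mul_zero]

lemma sum_Icc_neg_one_pow_mul_eight_mul_sub_four (s : ℕ) :
    ∑ j ∈ Icc 1 s, (-1 : ℝ) ^ j * (8 * j - 4) = (-1 : ℝ) ^ s * (4 * s) := by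
  induction s with
  | zero => simp
  | succ n ih =>
    rw [sum_Icc_succ_top (by omega), ih]
    push_cast
    ring

lemma one_add_sum_Icc_neg_one_pow_mul_eight_mul_sub_four_mul (s : ℕ) :
    1 + ∑ j ∈ Icc 1 s, (-1 : ℝ) ^ j * (8 * j - 4) * ((s : ℝ) + 0.5 - j) = (-1 : ℝ) ^ s := by
  induction s with
  | zero => simp
  | succ n ih =>
    have hshift : ∑ j ∈ Icc 1 n, (-1 : ℝ) ^ j * (8 * j - 4) * ((n + 1 : ℕ) + 0.5 - j)
        = ∑ j ∈ Icc 1 n, (-1 : ℝ) ^ j * (8 * j - 4) * ((n : ℝ) + 0.5 - j)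
          + ∑ j ∈ Icc 1 n, (-1 : ℝ) ^ j * (8 * j - 4) := by
      rw [← sum_add_distrib]
      refine sum_congr rfl fun j _ => ?_
      push_cast
      ring
    rw [sum_Icc_succ_top (by omega), hshift, sum_Icc_neg_one_pow_mul_eight_mul_sub_four,
      ← add_assoc, ← add_assoc, ih]
    push_cast
    ring

theorem relu_sum_parity_general (k : ℕ) (s : ℕ) (hs : s ≤ k) :
    1 + ∑ j ∈ Finset.Icc 1 k, (-1 : ℝ) ^ j * (8 * j - 4) *
        max ((s : ℝ) + 0.5 - j) 0
      = (-1 : ℝ) ^ s := by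
  rw [sum_Icc_mul_max_sub_eq_sum_Icc _ hs (by norm_num) (by norm_num),
    one_add_sum_Icc_neg_one_pow_mul_eight_mul_sub_four_mul]

/-- For every `0 ≤ s ≤ k`, the ReLU telescoping sum
`1 + ∑_{j=1}^k (-1)^j (8j-4) max(s + 0.5 - j, 0)` equals `(-1)^s`. -/
theorem relu_sum_parity (k : ℕ) (hk : 0 < k) (s : ℕ) (hs : s ≤ k) :
    1 + ∑ j ∈ Finset.Icc 1 k, (-1 : ℝ) ^ j * (8 * j - 4) *
        max ((s : ℝ) + 0.5 - j) 0
      = (-1 : ℝ) ^ s :=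
  relu_sum_parity_general k s hs
end

section
/- Let h: {0,1}^n → ℝ be any function that does not depend on coordinate p, i.e., h(x) = h(flip_p(x)) for all x, where flip_p flips the p-th bit. If p ∈ B and ℓ is the squared hinge loss ℓ(y, ŷ) = (max(0, 1 - yŷ))², then the expected risk E_{x ~ Unif({0,1}^n)}[ℓ(f_B(x), h(x))] ≥ 1. -/
/-!
Flipping bit `p ∈ B` negates the parity `f_B` but leaves `h` unchanged, so the margins
`f_B(x) h(x)` at `x` and at its flip are `t` and `-t`. Since
`max(0, 1 - t)² + max(0, 1 + t)² ≥ 2` for every real `t`, the losses at the two points of each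
flip pair average to at least `1`, and so does the loss over the whole cube.
-/

open Finset Function

lemma two_le_sq_max_zero_sub_add_sq_max_zero_add (t : ℝ) :
    2 ≤ max 0 (1 - t) ^ 2 + max 0 (1 + t) ^ 2 := by
  nlinarith [le_max_left 0 (1 - t), le_max_right 0 (1 - t), le_max_left 0 (1 + t),
    le_max_right 0 (1 + t), sq_nonneg (max 0 (1 - t) - max 0 (1 + t))]

lemma Function.Involutive.card_mul_le_sum {α K : Type*} [Fintype α] [Field K] [LinearOrder K]
    [IsStrictOrderedRing K] {σ : α → α} (hσ : Involutive σ) {g : α → K} {c : K}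
    (hg : ∀ x, 2 * c ≤ g x + g (σ x)) : Fintype.card α * c ≤ ∑ x, g x := by
  have hpair : ∑ x, (g x + g (σ x)) = 2 * ∑ x, g x := by
    rw [sum_add_distrib, hσ.bijective.sum_comp g, two_mul]
  have hsum : ∑ _x : α, 2 * c ≤ 2 * ∑ x, g x := hpair ▸ sum_le_sum fun x _ => hg x
  rw [sum_const, card_univ, nsmul_eq_mul] at hsum
  linarith

lemma involutive_update_one_sub {ι : Type*} [DecidableEq ι] (p : ι) :
    Involutive fun x : ι → Fin 2 => update x p (1 - x p) := by
  intro x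
  have h : ∀ a : Fin 2, 1 - (1 - a) = a := by decide
  simp [h]

lemma neg_one_pow_val_one_sub (a : Fin 2) :
    (-1 : ℝ) ^ ((1 - a : Fin 2) : ℕ) = -(-1) ^ (a : ℕ) := by
  fin_cases a <;> norm_num

lemma prod_neg_one_pow_update_one_sub {ι : Type*} [DecidableEq ι] {B : Finset ι} {p : ι}
    (hp : p ∈ B) (x : ι → Fin 2) :
    ∏ i ∈ B, (-1 : ℝ) ^ (update x p (1 - x p) i : ℕ) = -∏ i ∈ B, (-1 : ℝ) ^ (x i : ℕ) := by
  simp_rw [apply_update (fun _ (a : Fin 2) => (-1 : ℝ) ^ (a : ℕ)), prod_update_of_mem hp,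
    neg_one_pow_val_one_sub, ← mul_prod_erase B _ hp, sdiff_singleton_eq_erase, neg_mul]

/-- Any predictor that does not depend on a coordinate `p ∈ B` has expected
squared hinge loss at least `1` for the parity function on `B`, under the
uniform distribution on `{0,1}^n`. -/
theorem flip_invariant_risk_ge_one (n : ℕ) (B : Finset (Fin n)) (p : Fin n)
    (hp : p ∈ B) (h : (Fin n → Fin 2) → ℝ)
    (hinv : ∀ x : Fin n → Fin 2, h x = h (Function.update x p (1 - x p))) :
    (1 : ℝ) ≤ (∑ x : Fin n → Fin 2,
        (max 0 (1 - (∏ i ∈ B, (-1 : ℝ) ^ (x i : ℕ)) * h x)) ^ 2) / 2 ^ n := by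
  have hpair : ∀ x : Fin n → Fin 2, 2 * 1 ≤
      max 0 (1 - (∏ i ∈ B, (-1 : ℝ) ^ (x i : ℕ)) * h x) ^ 2 +
      max 0 (1 - (∏ i ∈ B, (-1 : ℝ) ^ (update x p (1 - x p) i : ℕ)) *
        h (update x p (1 - x p))) ^ 2 := by
    intro x
    rw [prod_neg_one_pow_update_one_sub hp, ← hinv x, neg_mul, sub_neg_eq_add, mul_one]
    exact two_le_sq_max_zero_sub_add_sq_max_zero_add _
  have hsum := (involutive_update_one_sub p).card_mul_le_sum hpair
  rw [le_div_iff₀ (by positivity), one_mul]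
  simpa using hsum
end

section
/- Let γ be the softmax of scores s ∈ ℝ^n and γ̃ the softmax after replacing only the p-th score s_p by s̃_p ≥ s_p, with γ̃_p ≤ ε (the new attention on position p is at most ε). Then for every r ≠ p, |γ_r - γ̃_r| ≤ ε·γ_r, and |γ_p - γ̃_p| ≤ ε. -/
/-!
Raising the score at `p` from `s p` to `c` turns the normaliser `Z` into
`Z' = Z + (exp c - exp (s p))` and multiplies every other weight by `Z / Z'`. The relative loss
`(exp c - exp (s p)) / Z'` is then at most `exp c / Z'`, the new weight at `p`. That weight only
grows, so it moves by at most its new value.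
-/

open Finset Real Function

variable {ι : Type*} [Fintype ι]

noncomputable def softmax (s : ι → ℝ) (j : ι) : ℝ :=
  exp (s j) / ∑ q, exp (s q)

lemma softmax_nonneg (s : ι → ℝ) (j : ι) : 0 ≤ softmax s j := by
  unfold softmax; positivity

lemma sum_exp_pos (s : ι → ℝ) (p : ι) : 0 < ∑ q, exp (s q) :=
  Finset.sum_pos (fun q _ => exp_pos (s q)) ⟨p, mem_univ p⟩

variable [DecidableEq ι]

lemma sum_exp_update (s : ι → ℝ) (p : ι) (c : ℝ) :
    ∑ q, exp (update s p c q) = ∑ q, exp (s q) + (exp c - exp (s p)) := by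
  have hupd : ∀ q, exp (update s p c q) = update (fun q => exp (s q)) p (exp c) q :=
    fun q => apply_update (fun _ x => exp x) s p c q
  simp only [hupd, sum_update_of_mem (mem_univ p),
    sum_eq_add_sum_sdiff_singleton_of_mem (mem_univ p) fun q => exp (s q)]
  ring

lemma softmax_sub_softmax_update_of_ne (s : ι → ℝ) {p r : ι} (hr : r ≠ p) (c : ℝ) :
    softmax s r - softmax (update s p c) r
      = softmax s r * ((exp c - exp (s p)) / ∑ q, exp (update s p c q)) := by
  have hZ := sum_exp_pos s p
  have hZ' := sum_exp_pos (update s p c) p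
  unfold softmax
  rw [sum_exp_update] at hZ'
  rw [update_of_ne hr, sum_exp_update]
  field_simp
  ring

lemma abs_softmax_sub_softmax_update_of_ne_le (s : ι → ℝ) {p r : ι} (hr : r ≠ p) {c : ℝ}
    (hc : s p ≤ c) :
    |softmax s r - softmax (update s p c) r| ≤ softmax (update s p c) p * softmax s r := by
  have hZ' := sum_exp_pos (update s p c) p
  have hshift_nonneg : 0 ≤ exp c - exp (s p) := sub_nonneg.2 (exp_le_exp.2 hc)
  have hshift_le : exp c - exp (s p) ≤ exp c := sub_le_self _ (exp_pos _).le
  rw [softmax_sub_softmax_update_of_ne s hr,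
    abs_of_nonneg (mul_nonneg (softmax_nonneg s r) (div_nonneg hshift_nonneg hZ'.le)), mul_comm]
  gcongr
  · exact softmax_nonneg s r
  · simpa [softmax] using div_le_div_of_nonneg_right hshift_le hZ'.le

lemma softmax_le_softmax_update_self (s : ι → ℝ) (p : ι) {c : ℝ} (hc : s p ≤ c) :
    softmax s p ≤ softmax (update s p c) p := by
  have hZ := sum_exp_pos s p
  have hZ' := sum_exp_pos (update s p c) p
  have hEZ : exp (s p) ≤ ∑ q, exp (s q) :=
    single_le_sum (fun q _ => (exp_pos (s q)).le) (mem_univ p)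
  have hEC : exp (s p) ≤ exp c := exp_le_exp.2 hc
  unfold softmax
  rw [update_self, div_le_div_iff₀ hZ hZ', sum_exp_update]
  nlinarith [mul_nonneg (sub_nonneg.2 hEC) (sub_nonneg.2 hEZ)]

lemma abs_softmax_sub_softmax_update_self_le (s : ι → ℝ) (p : ι) {c : ℝ} (hc : s p ≤ c) :
    |softmax s p - softmax (update s p c) p| ≤ softmax (update s p c) p :=
  abs_sub_le_of_nonneg_of_le (softmax_nonneg s p) (softmax_le_softmax_update_self s p hc)
    (softmax_nonneg _ p) le_rfl

theorem softmax_single_score_stability_general (n : ℕ) (s : Fin n → ℝ) (p : Fin n)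
    (c : ℝ) (hc : s p ≤ c) (ε : ℝ)
    (γ γ' : Fin n → ℝ)
    (hγ : ∀ j, γ j = Real.exp (s j) / ∑ q : Fin n, Real.exp (s q))
    (hγ' : ∀ j, γ' j = Real.exp (Function.update s p c j) /
        ∑ q : Fin n, Real.exp (Function.update s p c q))
    (hεp : γ' p ≤ ε) :
    (∀ r, r ≠ p → |γ r - γ' r| ≤ ε * γ r) ∧ |γ p - γ' p| ≤ ε := by
  obtain rfl : γ = softmax s := funext hγ
  obtain rfl : γ' = softmax (update s p c) := funext hγ'
  refine ⟨fun r hr => ?_, (abs_softmax_sub_softmax_update_self_le s p hc).trans hεp⟩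
  calc |softmax s r - softmax (update s p c) r|
      ≤ softmax (update s p c) p * softmax s r := abs_softmax_sub_softmax_update_of_ne_le s hr hc
    _ ≤ ε * softmax s r := by gcongr; exact softmax_nonneg s r

/-- Stability of softmax under increasing a single score: if after replacing
`s p` by a larger value the new softmax weight at `p` is at most `ε`, then all
other weights change multiplicatively by at most `ε`, and the weight at `p`
changes by at most `ε`. -/
theorem softmax_single_score_stability (n : ℕ) (s : Fin n → ℝ) (p : Fin n)
    (c : ℝ) (hc : s p ≤ c) (ε : ℝ) (hε0 : 0 < ε) (hε1 : ε < 1)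
    (γ γ' : Fin n → ℝ)
    (hγ : ∀ j, γ j = Real.exp (s j) / ∑ q : Fin n, Real.exp (s q))
    (hγ' : ∀ j, γ' j = Real.exp (Function.update s p c j) /
        ∑ q : Fin n, Real.exp (Function.update s p c q))
    (hεp : γ' p ≤ ε) :
    (∀ r, r ≠ p → |γ r - γ' r| ≤ ε * γ r) ∧ |γ p - γ' p| ≤ ε :=
  softmax_single_score_stability_general n s p c hc ε γ γ' hγ hγ' hεp
end

section
/- Counting bound: fix m sets S_1,…,S_m ⊆ [n], each of size T = ⌈(n-1)/m⌉ - 1, and tokens u_1,…,u_m ∈ {0,1}. Let X' ⊆ {0,1}^n be the set of strings x such that for every i, at least ⌈n/(5m)⌉ of the positions j ∈ S_i satisfy x_j = u_i. Then |{0,1}^n \ X'| ≤ m · (Σ_{i=0}^{⌈n/(5m)⌉} C(T, i)) · 2^{n - T}, and hence |X'| ≥ 2^n (1 - 2m / 2^{⌈(n-1)/(5m)⌉}) using Σ_{i=0}^{⌈n/(5m)⌉} C(T,i) ≤ (5e)^{⌈n/(5m)⌉} ≤ 16^{⌈n/(5m)⌉}. -/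
/-! A string outside `X'` agrees with `u i` at fewer than `k = ⌈n/(5m)⌉` positions of some `S i`;
it is determined by that agreement set, a small subset of `S i`, together with its values off `S i`,
whence the union bound. For the explicit bound write `k = q + 1`: once `5q ≤ T` the tail
`∑_{j ≤ q+1} C(T, j)` is at most `2^(T-q)`. At `T = 5q` this follows, for `q ≥ 6`, from the weighted
estimate `(∑_{j ≤ k} C(T, j)) 4^(T-k) ≤ 5^T` read off the binomial expansion of `(1 + 4)^T`, and
each increment of `T` at most doubles the tail by Pascal's rule. The ceilings satisfy
`4q + ⌈(n-1)/(5m)⌉ ≤ T + 1`, exactly the room needed for the factor `2^(T + 1 - ⌈(n-1)/(5m)⌉)`. -/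
open Finset

namespace Nat

theorem sum_range_choose_succ_le_two_mul (T r : ℕ) :
    ∑ j ∈ range r, (T + 1).choose j ≤ 2 * ∑ j ∈ range r, T.choose j := by
  cases r with
  | zero => simp
  | succ r =>
    have pascal : ∑ j ∈ range (r + 1), (T + 1).choose j
        = ∑ j ∈ range (r + 1), T.choose j + ∑ j ∈ range r, T.choose j := by
      rw [sum_range_succ', sum_range_succ' (fun j => T.choose j)]
      simp only [Nat.choose_succ_succ, Nat.choose_zero_right, sum_add_distrib]
      ring
    rw [pascal, two_mul]
    exact Nat.add_le_add_left (sum_le_sum_of_subset (range_subset_range.2 r.le_succ)) _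

theorem sum_range_choose_mul_pow_le {b : ℕ} (hb : 1 ≤ b) {T k : ℕ} (hk : k ≤ T) :
    (∑ j ∈ range (k + 1), T.choose j) * b ^ (T - k) ≤ (b + 1) ^ T :=
  calc (∑ j ∈ range (k + 1), T.choose j) * b ^ (T - k)
      ≤ ∑ j ∈ range (k + 1), T.choose j * b ^ (T - j) := by
        rw [sum_mul]
        refine sum_le_sum fun j hj => Nat.mul_le_mul_left _ (Nat.pow_le_pow_right hb ?_)
        exact Nat.sub_le_sub_left (Nat.lt_succ_iff.mp (mem_range.mp hj)) T
    _ ≤ ∑ j ∈ range (T + 1), T.choose j * b ^ (T - j) :=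
        Finset.sum_le_sum_of_subset (range_subset_range.2 (Nat.succ_le_succ hk))
    _ = (b + 1) ^ T := by
        rw [add_comm b, add_pow]
        simp only [one_pow, one_mul, Nat.cast_id]
        exact sum_congr rfl fun j _ => by ring

theorem sum_range_choose_five_mul_le (q : ℕ) :
    ∑ j ∈ range (q + 2), (5 * q).choose j ≤ 16 ^ q := by
  obtain hq | hq := le_or_gt q 5
  · interval_cases q <;> decide
  obtain ⟨d, rfl⟩ : ∃ d, q = d + 6 := ⟨q - 6, by omega⟩
  -- for `q ≥ 6` the weighted estimate suffices, as `4 * 3125 ^ q ≤ 4096 ^ q`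
  have weighted := sum_range_choose_mul_pow_le (b := 4) (by norm_num)
    (show d + 6 + 1 ≤ 5 * (d + 6) by omega)
  have five_pow : 5 ^ (5 * (d + 6)) ≤ 16 ^ (d + 6) * 4 ^ (5 * (d + 6) - (d + 6 + 1)) :=
    calc 5 ^ (5 * (d + 6)) = 3125 ^ d * 5 ^ 30 := by rw [mul_add, pow_add, pow_mul]; rfl
      _ ≤ 4096 ^ d * 2 ^ 70 := Nat.mul_le_mul (Nat.pow_le_pow_left (by norm_num) d) (by norm_num)
      _ = 16 ^ (d + 6) * 4 ^ (5 * (d + 6) - (d + 6 + 1)) := by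
        rw [show 5 * (d + 6) - (d + 6 + 1) = 4 * d + 23 by omega, pow_add, pow_add, pow_mul,
          mul_mul_mul_comm, ← mul_pow]
        norm_num
  exact Nat.le_of_mul_le_mul_right (weighted.trans five_pow) (by positivity)

theorem sum_range_choose_le_two_pow {q T : ℕ} (hT : 5 * q ≤ T) :
    ∑ j ∈ range (q + 2), T.choose j ≤ 2 ^ (T - q) := by
  induction T, hT using Nat.le_induction with
  | base =>
    calc _ ≤ 16 ^ q := sum_range_choose_five_mul_le q
      _ = 2 ^ (5 * q - q) := by rw [show 5 * q - q = 4 * q by omega, pow_mul]; norm_num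
  | succ T hT ih =>
    calc _ ≤ 2 * ∑ j ∈ range (q + 2), T.choose j := sum_range_choose_succ_le_two_mul T _
      _ ≤ 2 * 2 ^ (T - q) := by gcongr
      _ = 2 ^ (T + 1 - q) := by rw [← pow_succ', show T + 1 - q = T - q + 1 by omega]

theorem sum_range_choose_le_two_pow_of_le {p q T : ℕ} (hp : p ≤ q + 1) (h : 4 * q + p ≤ T + 1) :
    ∑ j ∈ range (q + 2), T.choose j ≤ 2 ^ (T + 1 - p) :=
  calc ∑ j ∈ range (q + 2), T.choose j
      ≤ ∑ j ∈ range (q + 2), (T + (q + 1 - p)).choose j :=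
        sum_le_sum fun j _ => Nat.choose_le_choose j (Nat.le_add_right T _)
    _ ≤ 2 ^ (T + (q + 1 - p) - q) := sum_range_choose_le_two_pow (by omega)
    _ = 2 ^ (T + 1 - p) := by congr 1; omega

theorem ceilDiv_le_div_add_one (N c : ℕ) : N ⌈/⌉ c ≤ N / c + 1 := by
  rw [ceilDiv_eq_add_pred_div]
  calc (N + c - 1) / c ≤ (N + c) / c := Nat.div_le_div_right (by omega)
    _ ≤ N / c + 1 := by
      rcases c.eq_zero_or_pos with rfl | hc
      · simp
      · rw [Nat.add_div_right N hc]

theorem four_mul_div_add_ceilDiv_le (N m : ℕ) :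
    4 * (N / (5 * m)) + N ⌈/⌉ (5 * m) ≤ N ⌈/⌉ m := by
  rcases m.eq_zero_or_pos with rfl | hm
  · simp
  set q := N / (5 * m)
  have hq : q * (5 * m) ≤ N := Nat.div_mul_le_self N (5 * m)
  by_cases hN : N ≤ 5 * m * q
  · -- `N` is a multiple of `5 * m`, so the two ceilings are exact
    have hp : N ⌈/⌉ (5 * m) ≤ q := (ceilDiv_le_iff_le_mul (by omega)).2 hN
    have hC : 5 * q ≤ N ⌈/⌉ m := by
      refine ((Nat.le_div_iff_mul_le hm).2 ?_).trans (floorDiv_le_ceilDiv (a := m) (b := N))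
      linarith
    omega
  · have hp := ceilDiv_le_div_add_one N (5 * m)
    have hC : 5 * q < N ⌈/⌉ m := by
      refine lt_of_not_ge fun h => hN ?_
      have := (ceilDiv_le_iff_le_mul hm).1 h
      linarith
    omega

end Nat

theorem Fin.eq_of_eq_iff_eq {a b u : Fin 2} (h : a = u ↔ b = u) : a = b := by
  revert a b u; decide

section Agreements

variable {ι : Type*} [Fintype ι] [DecidableEq ι]

theorem card_few_agreements_le (s : Finset ι) (u : Fin 2) (k : ℕ) :
    #{x : ι → Fin 2 | #{j ∈ s | x j = u} ≤ k}
      ≤ (∑ i ∈ range (k + 1), (#s).choose i) * 2 ^ (Fintype.card ι - #s) := by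
  let small : Finset (Finset ι) := (range (k + 1)).biUnion (powersetCard · s)
  have hcard : #(small ×ˢ (univ : Finset ({j // j ∉ s} → Fin 2)))
      = (∑ i ∈ range (k + 1), (#s).choose i) * 2 ^ (Fintype.card ι - #s) := by
    rw [card_product, card_biUnion fun _ _ _ _ h => s.pairwise_disjoint_powersetCard h]
    simp [Fintype.card_subtype_compl]
  rw [← hcard]
  refine card_le_card_of_injOn (fun x => ({j ∈ s | x j = u}, fun j => x j)) ?_ ?_
  · intro x hx
    simp only [coe_filter, mem_univ, true_and, Set.mem_ofPred_eq] at hx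
    refine mem_product.2 ⟨mem_biUnion.2 ⟨_, mem_range.2 (Nat.lt_succ_of_le hx), ?_⟩, mem_univ _⟩
    exact mem_powersetCard.2 ⟨filter_subset _ _, rfl⟩
  · intro x _ y _ hxy
    simp only [Prod.mk.injEq] at hxy
    funext j
    by_cases hj : j ∈ s
    · have := congrArg (j ∈ ·) hxy.1
      simp only [mem_filter, hj, true_and, eq_iff_iff] at this
      exact Fin.eq_of_eq_iff_eq this
    · exact congrFun hxy.2 ⟨j, hj⟩

theorem card_exists_few_agreements_le {κ : Type*} [Fintype κ] (S : κ → Finset ι) (u : κ → Fin 2)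
    {T : ℕ} (hS : ∀ i, #(S i) = T) (k : ℕ) :
    #{x : ι → Fin 2 | ∃ i, #{j ∈ S i | x j = u i} ≤ k}
      ≤ Fintype.card κ * (∑ i ∈ range (k + 1), T.choose i) * 2 ^ (Fintype.card ι - T) := by
  have hunion : ({x : ι → Fin 2 | ∃ i, #{j ∈ S i | x j = u i} ≤ k} : Finset _)
      = univ.biUnion fun i => {x : ι → Fin 2 | #{j ∈ S i | x j = u i} ≤ k} := by
    ext x; simp
  rw [hunion, mul_assoc]
  exact card_biUnion_le_card_mul _ _ _ fun i _ => hS i ▸ card_few_agreements_le (S i) (u i) k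

end Agreements

theorem le_card_of_card_univ_sdiff_le {α : Type*} [Fintype α] [DecidableEq α] (X : Finset α)
    {n m p : ℕ} (hα : Fintype.card α = 2 ^ n) (hp : p ≤ n + 1)
    (h : #(univ \ X) ≤ m * 2 ^ (n + 1 - p)) :
    (2 ^ n * (1 - 2 * m / 2 ^ p : ℝ)) ≤ #X :=
  calc (2 ^ n * (1 - 2 * m / 2 ^ p : ℝ)) = 2 ^ n - m * 2 ^ (n + 1 - p) := by
        rw [pow_sub₀ _ two_ne_zero hp, pow_succ]; field_simp
    _ ≤ 2 ^ n - #(univ \ X) := by gcongr; exact_mod_cast h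
    _ = #X := by rw [card_univ_sdiff, Nat.cast_sub (card_le_univ X), hα]; push_cast; ring

/-- Counting bound: the set of strings that fail, for some head `i`, to place
at least `⌈n/(5m)⌉` maximizer tokens inside `S i` is small, hence `X'` contains
at least a `(1 - 2m/2^⌈(n-1)/(5m)⌉)` fraction of all strings. -/
theorem good_strings_counting_bound (n m : ℕ) (hm : 0 < m) (hnm : 5 * m ≤ n)
    (S : Fin m → Finset (Fin n))
    (hS : ∀ i, (S i).card = (n - 1 + m - 1) / m - 1)
    (u : Fin m → Fin 2)
    (X' : Finset (Fin n → Fin 2))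
    (hX' : ∀ x : Fin n → Fin 2, x ∈ X' ↔
      ∀ i : Fin m, (n + 5 * m - 1) / (5 * m) ≤
        ((S i).filter (fun j => x j = u i)).card) :
    ((Finset.univ \ X').card ≤
        m * (∑ i ∈ Finset.range ((n + 5 * m - 1) / (5 * m) + 1),
              Nat.choose ((n - 1 + m - 1) / m - 1) i) *
          2 ^ (n - ((n - 1 + m - 1) / m - 1))) ∧
    (2 ^ n * (1 - 2 * m / 2 ^ ((n - 1 + 5 * m - 1) / (5 * m)) : ℝ) ≤
        (X'.card : ℝ)) := by
  classical
  have hk : (n + 5 * m - 1) / (5 * m) = (n - 1) / (5 * m) + 1 := by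
    rw [show n + 5 * m - 1 = n - 1 + 5 * m by omega, Nat.add_div_right _ (by omega)]
  set k := (n + 5 * m - 1) / (5 * m)
  set T := (n - 1 + m - 1) / m - 1
  set p := (n - 1 + 5 * m - 1) / (5 * m)
  set q := (n - 1) / (5 * m)
  have hp : p ≤ q + 1 := Nat.ceilDiv_le_div_add_one (n - 1) (5 * m)
  have hpT : 4 * q + p ≤ T + 1 :=
    (Nat.four_mul_div_add_ceilDiv_le (n - 1) m).trans (Nat.le_add_of_sub_le le_rfl)
  have hT : T ≤ n := hS ⟨0, hm⟩ ▸ (card_le_univ (S ⟨0, hm⟩)).trans_eq (Fintype.card_fin n)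
  have hbad : #(univ \ X') ≤ m * (∑ i ∈ range (k + 1), T.choose i) * 2 ^ (n - T) := by
    refine (card_le_card fun x hx => ?_).trans
      (by simpa using card_exists_few_agreements_le S u hS k)
    simp only [mem_sdiff, mem_univ, true_and, hX', not_forall, not_le] at hx
    obtain ⟨i, hi⟩ := hx
    simpa using ⟨i, hi.le⟩
  refine ⟨hbad, le_card_of_card_univ_sdiff_le X' (by simp) (by omega) ?_⟩
  calc #(univ \ X') ≤ m * 2 ^ (T + 1 - p) * 2 ^ (n - T) :=
        hbad.trans (by rw [hk]; gcongr; exact Nat.sum_range_choose_le_two_pow_of_le hp hpT)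
    _ = m * 2 ^ (n + 1 - p) := by rw [mul_assoc, ← pow_add]; congr 2; omega
end

section
/- Expected risk lower bound for flip-invariant predictors on a large set: let X' ⊆ {0,1}^n be closed under flipping bit p, partitioned into X'_0 (x_p = 0) and X'_1 = flip_p(X'_0). Suppose h: {0,1}^n → ℝ satisfies |h(x) - h(flip_p(x))| ≤ δ for all x ∈ X'_0, and p ∈ B. Then with ℓ the squared hinge loss and f_B the parity on B, Σ_{x∈X'} ℓ(f_B(x), h(x)) ≥ |X'| · (1 - δ/2)² whenever δ ≤ 2, and hence E_{x~Unif({0,1}^n)}[ℓ(f_B(x), h(x))] ≥ (|X'|/2^n)(1 - δ/2)². -/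
open Finset

/-!
Flipping bit `p` is a fixed-point-free involution of `X'` that pairs `X'₀ = {x_p = 0}` with
`X'₁`, and because `p ∈ B` the parity labels of a pair are `±y` with `|y| = 1`. The two margins
`1 - y h(x)` and `1 + y h(flip x)` then sum to at least `2 - δ ≥ 0`, so by `u² + v² ≥ (u + v)² / 2`
the squared hinge losses of a pair sum to at least `2 (1 - δ/2)²`. Summing over the `|X'| / 2`
pairs bounds the loss on `X'`; the risk on the whole cube only adds nonnegative terms.
-/

section Involution

variable {α M : Type*} [AddCommMonoid M] {S : Finset α} {σ : α → α} {P : α → Prop}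
  [DecidablePred P]

theorem sum_eq_sum_filter_add_comp_of_involutive (hσ : Function.Involutive σ)
    (hS : ∀ x ∈ S, σ x ∈ S) (hP : ∀ x ∈ S, P (σ x) ↔ ¬ P x) (f : α → M) :
    ∑ x ∈ S, f x = ∑ x ∈ S.filter P, (f x + f (σ x)) := by
  have hswap : ∑ x ∈ S.filter (¬ P ·), f x = ∑ x ∈ S.filter P, f (σ x) := by
    refine (sum_nbij' σ σ ?_ ?_ (fun x _ => hσ x) (fun x _ => hσ x) fun x _ => rfl).symm
    · intro x hx
      rw [mem_filter] at hx ⊢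
      exact ⟨hS x hx.1, (hP x hx.1).not.mpr (not_not.mpr hx.2)⟩
    · intro x hx
      rw [mem_filter] at hx ⊢
      exact ⟨hS x hx.1, (hP x hx.1).mpr hx.2⟩
  rw [← sum_filter_add_sum_filter_not S P, hswap, sum_add_distrib]

theorem card_nsmul_le_sum_of_involutive [PartialOrder M] [IsOrderedAddMonoid M]
    (hσ : Function.Involutive σ) (hS : ∀ x ∈ S, σ x ∈ S) (hP : ∀ x ∈ S, P (σ x) ↔ ¬ P x)
    {f : α → M} {c : M} (hpair : ∀ x ∈ S, P x → c + c ≤ f x + f (σ x)) :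
    S.card • c ≤ ∑ x ∈ S, f x := by
  rw [← sum_const, sum_eq_sum_filter_add_comp_of_involutive hσ hS hP,
    sum_eq_sum_filter_add_comp_of_involutive hσ hS hP]
  exact sum_le_sum fun x hx => hpair x (mem_filter.mp hx).1 (mem_filter.mp hx).2

end Involution

def sqHinge (y ŷ : ℝ) : ℝ := (max 0 (1 - y * ŷ)) ^ 2

theorem two_mul_sq_le_sqHinge_add_sqHinge_neg {y a b δ : ℝ} (hy : |y| = 1) (hδ2 : δ ≤ 2)
    (hab : |a - b| ≤ δ) : 2 * (1 - δ / 2) ^ 2 ≤ sqHinge y a + sqHinge (-y) b := by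
  have hyab : y * a - y * b ≤ δ := by
    rw [← mul_sub]; exact (le_abs_self _).trans (by rwa [abs_mul, hy, one_mul])
  have hu : 1 - y * a ≤ max 0 (1 - y * a) := le_max_right _ _
  have hv : 1 - -y * b ≤ max 0 (1 - -y * b) := le_max_right _ _
  unfold sqHinge
  nlinarith [le_max_left 0 (1 - y * a), le_max_left 0 (1 - -y * b),
    sq_nonneg (max 0 (1 - y * a) - max 0 (1 - -y * b)),
    sq_nonneg (max 0 (1 - y * a) + max 0 (1 - -y * b) - (2 - δ))]

section Cube

variable {n : ℕ}

def flipBit (p : Fin n) (x : Fin n → Fin 2) : Fin n → Fin 2 := Function.update x p (1 - x p)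

theorem flipBit_apply_self (p : Fin n) (x : Fin n → Fin 2) : flipBit p x p = 1 - x p :=
  Function.update_self _ _ _

theorem flipBit_apply_of_ne {p i : Fin n} (x : Fin n → Fin 2) (hi : i ≠ p) :
    flipBit p x i = x i :=
  Function.update_of_ne hi _ _

theorem flipBit_involutive (p : Fin n) : Function.Involutive (flipBit p) := by
  intro x
  funext i
  by_cases hi : i = p
  · subst hi; rw [flipBit_apply_self, flipBit_apply_self, sub_sub_cancel]
  · rw [flipBit_apply_of_ne _ hi, flipBit_apply_of_ne _ hi]

theorem flipBit_apply_self_eq_zero_iff (p : Fin n) (x : Fin n → Fin 2) :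
    flipBit p x p = 0 ↔ ¬ x p = 0 := by
  rw [flipBit_apply_self]
  generalize x p = a
  revert a
  decide

def parity (B : Finset (Fin n)) (x : Fin n → Fin 2) : ℝ := ∏ i ∈ B, (-1 : ℝ) ^ (x i : ℕ)

theorem abs_parity (B : Finset (Fin n)) (x : Fin n → Fin 2) : |parity B x| = 1 := by
  simp [parity, abs_prod]

theorem parity_flipBit {B : Finset (Fin n)} {p : Fin n} (hp : p ∈ B) (x : Fin n → Fin 2) :
    parity B (flipBit p x) = -parity B x := by
  unfold parity
  rw [← mul_prod_erase _ _ hp, ← mul_prod_erase _ _ hp, ← neg_mul,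
    prod_congr rfl fun i hi => by rw [flipBit_apply_of_ne x (ne_of_mem_erase hi)],
    flipBit_apply_self]
  congr 1
  generalize x p = a
  fin_cases a <;> norm_num

end Cube

/-- Expected-risk lower bound for predictors that are nearly invariant to
flipping a parity bit `p ∈ B`, on a set `X'` closed under the flip. -/
theorem near_flip_invariant_risk_bound (n : ℕ) (B : Finset (Fin n)) (p : Fin n)
    (hp : p ∈ B) (X' : Finset (Fin n → Fin 2))
    (hclosed : ∀ x ∈ X', Function.update x p (1 - x p) ∈ X')
    (h : (Fin n → Fin 2) → ℝ) (δ : ℝ) (hδ2 : δ ≤ 2)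
    (hδ : ∀ x ∈ X', x p = 0 → |h x - h (Function.update x p (1 - x p))| ≤ δ) :
    (X'.card : ℝ) * (1 - δ / 2) ^ 2 ≤
      ∑ x ∈ X', (max 0 (1 - (∏ i ∈ B, (-1 : ℝ) ^ (x i : ℕ)) * h x)) ^ 2 ∧
    ((X'.card : ℝ) / 2 ^ n) * (1 - δ / 2) ^ 2 ≤
      (∑ x : Fin n → Fin 2,
        (max 0 (1 - (∏ i ∈ B, (-1 : ℝ) ^ (x i : ℕ)) * h x)) ^ 2) / 2 ^ n := by
  change _ ≤ ∑ x ∈ X', sqHinge (parity B x) (h x) ∧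
    _ ≤ (∑ x, sqHinge (parity B x) (h x)) / 2 ^ n
  have hrisk : (X'.card : ℝ) * (1 - δ / 2) ^ 2 ≤ ∑ x ∈ X', sqHinge (parity B x) (h x) := by
    rw [← nsmul_eq_mul]
    refine card_nsmul_le_sum_of_involutive (P := fun x => x p = 0) (flipBit_involutive p) hclosed
      (fun x _ => flipBit_apply_self_eq_zero_iff p x) fun x hx hx0 => ?_
    rw [← two_mul, parity_flipBit hp]
    exact two_mul_sq_le_sqHinge_add_sqHinge_neg (abs_parity B x) hδ2 (hδ x hx hx0)
  refine ⟨hrisk, ?_⟩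
  rw [div_mul_eq_mul_div]
  gcongr
  exact hrisk.trans (sum_le_sum_of_subset_of_nonneg (subset_univ X') fun x _ _ => sq_nonneg _)
end
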